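/- arXiv:2303.00700 — 6 statements merged into one kernel-verified Lean document; each statement's English description precedes it below -/
import Mathlib

section
/- For all real x, log(sinh(x)/x) ≤ x²/6 (with the convention sinh(0)/0 = 1); equivalently, sinh(x) ≤ x·exp(x²/6) for all x > 0. -/
/-!
Both `sinh x` and `x * exp (x ^ 2 / 6)` are power series in `x` with nonnegative coefficients
on odd powers only: `x ^ (2n+1) / (2n+1)!` against `x ^ (2n+1) / (6 ^ n * n!)`. Since
`6 ^ n * n! ≤ (2n+1)!`, the comparison holds term by term for `x ≥ 0`. The logarithmic form
follows by evenness of `sinh x / x`.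
-/

open Real Nat

theorem Nat.six_pow_mul_factorial_le_factorial (n : ℕ) : 6 ^ n * n ! ≤ (2 * n + 1)! := by
  induction n with
  | zero => simp
  | succ k ih =>
    rw [show 2 * (k + 1) + 1 = 2 * k + 1 + 1 + 1 by ring, factorial_succ, factorial_succ,
      factorial_succ, pow_succ]
    calc 6 ^ k * 6 * ((k + 1) * k !) = 6 * (k + 1) * (6 ^ k * k !) := by ring
      _ ≤ (2 * k + 1 + 1 + 1) * (2 * k + 1 + 1) * (2 * k + 1)! :=
          Nat.mul_le_mul (by nlinarith) ih
      _ = (2 * k + 1 + 1 + 1) * ((2 * k + 1 + 1) * (2 * k + 1)!) := by ring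

theorem Real.sinh_le_mul_exp_sq_div_six {x : ℝ} (hx : 0 ≤ x) :
    sinh x ≤ x * exp (x ^ 2 / 6) := by
  have hexp : HasSum (fun n : ℕ => x * ((x ^ 2 / 6) ^ n / n !)) (x * exp (x ^ 2 / 6)) := by
    rw [exp_eq_exp_ℝ]
    exact (NormedSpace.expSeries_div_hasSum_exp _).mul_left x
  refine hasSum_le (fun n => ?_) (hasSum_sinh x) hexp
  have hfac : (6 : ℝ) ^ n * n ! ≤ (2 * n + 1)! := by
    exact_mod_cast Nat.six_pow_mul_factorial_le_factorial n
  calc x ^ (2 * n + 1) / (2 * n + 1)! ≤ x ^ (2 * n + 1) / (6 ^ n * n !) := by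
        gcongr
    _ = x * ((x ^ 2 / 6) ^ n / n !) := by
        rw [div_pow, ← pow_mul, pow_succ]
        field_simp

theorem Real.log_sinh_div_self_le (x : ℝ) (hx : x ≠ 0) : log (sinh x / x) ≤ x ^ 2 / 6 := by
  have habs : sinh x / x = sinh |x| / |x| := by
    rcases abs_choice x with h | h <;> rw [h]
    rw [sinh_neg, neg_div_neg_eq]
  have hpos : 0 < |x| := abs_pos.mpr hx
  rw [habs, log_le_iff_le_exp (div_pos (sinh_pos_iff.mpr hpos) hpos), div_le_iff₀ hpos,
    ← sq_abs x, mul_comm]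
  exact sinh_le_mul_exp_sq_div_six hpos.le

theorem stmt2 :
    (∀ x : ℝ, x ≠ 0 → Real.log (Real.sinh x / x) ≤ x ^ 2 / 6) ∧
    (∀ x : ℝ, 0 < x → Real.sinh x ≤ x * Real.exp (x ^ 2 / 6)) :=
  ⟨log_sinh_div_self_le, fun _ hx => sinh_le_mul_exp_sq_div_six hx.le⟩
end

section
/- Let β ∈ (−π/2, π/2), let 0 < α₀ ≤ (π/2 − β)/2, and let α ∈ (0, α₀). Define q(u) := (u − sin(β−α))/(u − sin(β+α)) for u ≥ 1. Then for all u ≥ 1: (1/2)·log q(1) ≥ (1/2)·log q(u) ≥ (1/2)·log q(1) · (1 − cos α₀)/(u − cos α₀). -/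
/-!
Writing `a = sin (β - α) < b = sin (β + α) < c = cos α₀ < 1`, the quantity
`log q(u) = ∫ t in a..b, (u - t)⁻¹` is an integral of kernels that decrease in `u`, while
`(u - c) / (u - t) = 1 - (c - t) / (u - t)` increases in `u` for `t ≤ c`. Integrating these two
pointwise monotonicities gives `log q(u) ≤ log q(1)` and `(1 - c) log q(1) ≤ (u - c) log q(u)`.
-/

open Real

lemma log_div_sub_eq_integral_inv_sub {x y w : ℝ} (hx : x < w) (hy : y < w) :
    log ((w - x) / (w - y)) = ∫ t in x..y, (w - t)⁻¹ := by
  rw [intervalIntegral.integral_comp_sub_left (fun s => s⁻¹) w,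
    integral_inv (Set.notMem_uIcc_of_lt (by linarith) (by linarith))]

lemma intervalIntegrable_inv_sub {a b w : ℝ} (hab : a ≤ b) (hb : b < w) :
    IntervalIntegrable (fun t => (w - t)⁻¹) MeasureTheory.volume a b := by
  refine ContinuousOn.intervalIntegrable
    (ContinuousOn.inv₀ (continuous_const.sub continuous_id).continuousOn fun t ht => ?_)
  rw [Set.uIcc_of_le hab] at ht
  exact sub_ne_zero.mpr (by linarith [ht.2])

lemma sub_div_sub_le_sub_div_sub {t c v u : ℝ} (htc : t ≤ c) (htv : t < v) (hvu : v ≤ u) :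
    (v - c) / (v - t) ≤ (u - c) / (u - t) := by
  rw [div_le_div_iff₀ (by linarith) (by linarith)]
  nlinarith [mul_nonneg (sub_nonneg.mpr htc) (sub_nonneg.mpr hvu)]

section LogRatio

variable {a b v u : ℝ}

lemma log_div_sub_le_of_le (hab : a ≤ b) (hbv : b < v) (hvu : v ≤ u) :
    log ((u - a) / (u - b)) ≤ log ((v - a) / (v - b)) := by
  rw [log_div_sub_eq_integral_inv_sub (by linarith) (by linarith),
    log_div_sub_eq_integral_inv_sub (by linarith) hbv]
  refine intervalIntegral.integral_mono_on hab (intervalIntegrable_inv_sub hab (by linarith))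
    (intervalIntegrable_inv_sub hab hbv) fun t ht => ?_
  have htv : 0 < v - t := by linarith [ht.2]
  gcongr

lemma log_div_sub_mul_sub_le_of_le {c : ℝ} (hab : a ≤ b) (hbc : b ≤ c) (hbv : b < v)
    (hvu : v ≤ u) :
    log ((v - a) / (v - b)) * (v - c) ≤ log ((u - a) / (u - b)) * (u - c) := by
  rw [log_div_sub_eq_integral_inv_sub (by linarith) hbv,
    log_div_sub_eq_integral_inv_sub (by linarith) (by linarith),
    ← intervalIntegral.integral_mul_const, ← intervalIntegral.integral_mul_const]
  refine intervalIntegral.integral_mono_on hab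
    ((intervalIntegrable_inv_sub hab hbv).mul_const _)
    ((intervalIntegrable_inv_sub hab (by linarith)).mul_const _) fun t ht => ?_
  simpa only [inv_mul_eq_div] using
    sub_div_sub_le_sub_div_sub (ht.2.trans hbc) (by linarith [ht.2]) hvu

end LogRatio

lemma sin_sub_lt_sin_add {β α : ℝ} (hβ : 0 < cos β) (hα : 0 < sin α) :
    sin (β - α) < sin (β + α) := by
  rw [sin_sub, sin_add]
  linarith [mul_pos hβ hα]

lemma sin_add_lt_cos {β α α₀ : ℝ} (hβ : -(π / 2) < β) (hα : 0 < α) (hαα₀ : α < α₀)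
    (hα₀ : α₀ ≤ (π / 2 - β) / 2) :
    sin (β + α) < cos α₀ := by
  rw [← sin_pi_div_two_sub]
  exact sin_lt_sin_of_lt_of_le_pi_div_two (by linarith) (by linarith [pi_pos]) (by linarith)

theorem stmt3_general (β α₀ α : ℝ)
    (hβ : β ∈ Set.Ioo (-(π/2)) (π/2))
    (hα₀' : α₀ ≤ (π/2 - β)/2)
    (hα : α ∈ Set.Ioo 0 α₀)
    (q : ℝ → ℝ) (hq : ∀ u, q u = (u - Real.sin (β - α)) / (u - Real.sin (β + α))) :
    ∀ u : ℝ, 1 ≤ u →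
      (1/2) * Real.log (q u) ≤ (1/2) * Real.log (q 1) ∧
      (1/2) * Real.log (q 1) * ((1 - Real.cos α₀) / (u - Real.cos α₀)) ≤
        (1/2) * Real.log (q u) := by
  intro u hu
  obtain ⟨hα, hαα₀⟩ := hα
  have hα₀ : α₀ < π / 2 := by linarith [hβ.1]
  have hab : sin (β - α) < sin (β + α) := sin_sub_lt_sin_add (cos_pos_of_mem_Ioo hβ)
    (sin_pos_of_pos_of_lt_pi hα (by linarith [pi_pos]))
  have hbc : sin (β + α) < cos α₀ := sin_add_lt_cos hβ.1 hα hαα₀ hα₀'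
  have hc : cos α₀ < 1 := by
    simpa using cos_lt_cos_of_nonneg_of_le_pi le_rfl (by linarith [pi_pos]) (hα.trans hαα₀)
  rw [hq, hq]
  refine ⟨by gcongr 1 / 2 * ?_; exact log_div_sub_le_of_le hab.le (by linarith) hu, ?_⟩
  rw [mul_assoc]
  gcongr 1 / 2 * ?_
  rw [← mul_div_assoc, div_le_iff₀ (by linarith)]
  exact log_div_sub_mul_sub_le_of_le hab.le hbc.le (by linarith) hu

theorem stmt3 (β α₀ α : ℝ)
    (hβ : β ∈ Set.Ioo (-(π/2)) (π/2))
    (hα₀ : 0 < α₀) (hα₀' : α₀ ≤ (π/2 - β)/2)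
    (hα : α ∈ Set.Ioo 0 α₀)
    (q : ℝ → ℝ) (hq : ∀ u, q u = (u - Real.sin (β - α)) / (u - Real.sin (β + α))) :
    ∀ u : ℝ, 1 ≤ u →
      (1/2) * Real.log (q u) ≤ (1/2) * Real.log (q 1) ∧
      (1/2) * Real.log (q 1) * ((1 - Real.cos α₀) / (u - Real.cos α₀)) ≤
        (1/2) * Real.log (q u) :=
  stmt3_general β α₀ α hβ hα₀' hα q hq
end

section
/- Let β ∈ (−π/2, π/2), 0 < α₀ ≤ (π/2 − β)/2, α ∈ (0, α₀). For u ≥ 1 let q(u) := (u − sin(β−α))/(u − sin(β+α)). Then log q(u) ≥ ((1 − sin(β+α))/(u − sin(β+α))) · log q(1) for all u ≥ 1. -/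
/-! With `c = sin (β + α) - sin (β - α) ≥ 0` and `t = u - sin (β + α)`, the claim reads
`t₁ · log (1 + c / t₁) ≤ t · log (1 + c / t)` for `t₁ = 1 - sin (β + α) ≤ t`, i.e. the
monotonicity of `t ↦ log ((1 + c / t) ^ t)`. Its derivative is `-log x + x - 1 ≥ 0` with
`x = t / (t + c)`. -/

open Real Set

lemma hasDerivAt_mul_log_add_sub_log {c t : ℝ} (ht : 0 < t) (htc : 0 < t + c) :
    HasDerivAt (fun t => t * (log (t + c) - log t))
      (log (t + c) - log t + t * ((t + c)⁻¹ - t⁻¹)) t := by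
  have hlog_add : HasDerivAt (fun t => log (t + c)) (t + c)⁻¹ t := by
    simpa using ((hasDerivAt_id t).add_const c).log htc.ne'
  simpa using (hasDerivAt_id' t).fun_mul (hlog_add.fun_sub (hasDerivAt_log ht.ne'))

lemma monotoneOn_mul_log_add_sub_log {c : ℝ} (hc : 0 ≤ c) :
    MonotoneOn (fun t => t * (log (t + c) - log t)) (Ioi 0) := by
  have hderiv : ∀ t ∈ Ioi (0 : ℝ), HasDerivAt (fun t => t * (log (t + c) - log t))
      (log (t + c) - log t + t * ((t + c)⁻¹ - t⁻¹)) t :=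
    fun t ht => hasDerivAt_mul_log_add_sub_log ht (by simp at ht; linarith)
  refine monotoneOn_of_hasDerivWithinAt_nonneg (convex_Ioi 0)
    (fun t ht => (hderiv t ht).continuousAt.continuousWithinAt)
    (fun t ht => (hderiv t (interior_subset ht)).hasDerivWithinAt) ?_
  intro t ht
  rw [interior_Ioi, mem_Ioi] at ht
  have htc : 0 < t + c := by linarith
  have hlog : log (t / (t + c)) ≤ t / (t + c) - 1 := log_le_sub_one_of_pos (by positivity)
  have hslope : t * ((t + c)⁻¹ - t⁻¹) = t / (t + c) - 1 := by field_simp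
  rw [log_div ht.ne' htc.ne'] at hlog
  linarith

lemma div_mul_log_div_le_log_div {a b v u : ℝ} (hab : a ≤ b) (hbv : b < v) (hvu : v ≤ u) :
    (v - b) / (u - b) * log ((v - a) / (v - b)) ≤ log ((u - a) / (u - b)) := by
  have hvb : 0 < v - b := by linarith
  have hub : 0 < u - b := by linarith
  have hmono := monotoneOn_mul_log_add_sub_log (sub_nonneg.mpr hab) (mem_Ioi.mpr hvb)
    (mem_Ioi.mpr hub) (by linarith)
  simp only [sub_add_sub_cancel] at hmono
  rw [log_div (by linarith) hvb.ne', log_div (by linarith) hub.ne', div_mul_eq_mul_div,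
    div_le_iff₀ hub, mul_comm _ (u - b)]
  exact hmono

lemma sin_sub_le_sin_add {α β : ℝ} (hα : 0 ≤ α) (hα' : α ≤ π) (hβ : -(π / 2) ≤ β)
    (hβ' : β ≤ π / 2) : sin (β - α) ≤ sin (β + α) := by
  have hcos : 0 ≤ cos β := cos_nonneg_of_mem_Icc ⟨hβ, hβ'⟩
  have hsin : 0 ≤ sin α := sin_nonneg_of_nonneg_of_le_pi hα hα'
  rw [sin_add, sin_sub]
  nlinarith

theorem stmt4_general (β α₀ α : ℝ)
    (hβ : β ∈ Set.Ioo (-(π/2)) (π/2))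
    (hα₀' : α₀ ≤ (π/2 - β)/2)
    (hα : α ∈ Set.Ioo 0 α₀)
    (q : ℝ → ℝ) (hq : ∀ u, q u = (u - Real.sin (β - α)) / (u - Real.sin (β + α))) :
    ∀ u : ℝ, 1 ≤ u →
      ((1 - Real.sin (β + α)) / (u - Real.sin (β + α))) * Real.log (q 1) ≤
        Real.log (q u) := by
  obtain ⟨hβ, hβ'⟩ := hβ
  obtain ⟨hα, hαα₀⟩ := hα
  have hsin_le : sin (β - α) ≤ sin (β + α) :=
    sin_sub_le_sin_add hα.le (by linarith) hβ.le hβ'.le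
  have hsin_lt_one : sin (β + α) < 1 := by
    simpa using sin_lt_sin_of_lt_of_le_pi_div_two (by linarith) le_rfl
      (by linarith : β + α < π / 2)
  intro u hu
  rw [hq, hq]
  exact div_mul_log_div_le_log_div hsin_le hsin_lt_one hu

theorem stmt4 (β α₀ α : ℝ)
    (hβ : β ∈ Set.Ioo (-(π/2)) (π/2))
    (hα₀ : 0 < α₀) (hα₀' : α₀ ≤ (π/2 - β)/2)
    (hα : α ∈ Set.Ioo 0 α₀)
    (q : ℝ → ℝ) (hq : ∀ u, q u = (u - Real.sin (β - α)) / (u - Real.sin (β + α))) :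
    ∀ u : ℝ, 1 ≤ u →
      ((1 - Real.sin (β + α)) / (u - Real.sin (β + α))) * Real.log (q 1) ≤
        Real.log (q u) :=
  stmt4_general β α₀ α hβ hα₀' hα q hq
end

section
/- The map g(z) := z + (1 + e^{2z})/2 is a conformal bijection of the strip S = {z : |Im z| < π/2} onto the two-slit domain D* = ℂ \ {w : Re w ≤ 0 and |Im w| = π/2}. -/
/-!
The substitution `ζ = e^z` maps the strip onto the right half-plane, and there
`g z = f (e^z)` with `f ζ = log ζ + (1 + ζ²)/2`. Since `f' ζ = 1/ζ + ζ` has positive real part,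
`f` is injective (Noshiro–Warschawski), hence so is `g`. On the level set `|Im g| = π/2` an
elementary trigonometric estimate forces `Re g > 0`, so `g` maps the strip into `D*`, while it
maps the boundary lines of the strip into the slits. Finally `g(S)` is open by the open mapping
theorem and relatively closed in `D*` because `‖z‖ ≤ ‖g z‖ + 5` on the closed strip; as `D*` is
connected, `g(S) = D*`.
-/

open Real Set

theorem Real.mul_cos_lt_sin {r : ℝ} (h0 : 0 < r) (hπ : r < π) : r * cos r < sin r := by
  rcases lt_or_ge r (π / 2) with h | h
  · have hcos : 0 < cos r := cos_pos_of_mem_Ioo ⟨by linarith, h⟩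
    have := lt_tan h0 h
    rwa [tan_eq_sin_div_cos, lt_div_iff₀ hcos] at this
  · have hcos : cos r ≤ 0 := cos_nonpos_of_pi_div_two_le_of_le h (by linarith [pi_pos])
    nlinarith [sin_pos_of_pos_of_lt_pi h0 hπ]

/-- Noshiro–Warschawski: `Re ((f b - f a) / (b - a))` is an average of `Re f'` along `[a, b]`. -/
theorem Convex.injOn_of_hasDerivAt_re_pos {U : Set ℂ} (hU : Convex ℝ U) {f f' : ℂ → ℂ}
    (hf : ∀ z ∈ U, HasDerivAt f (f' z) z) (hf' : ∀ z ∈ U, 0 < (f' z).re) : InjOn f U := by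
  intro a ha b hb hab
  by_contra hne
  have hba : b - a ≠ 0 := sub_ne_zero.2 (Ne.symm hne)
  have hseg : ∀ t ∈ Icc (0 : ℝ) 1, a + t * (b - a) ∈ U := fun t ht => by
    simpa [Complex.real_smul] using hU.add_smul_sub_mem ha hb ht
  have hderiv : ∀ t ∈ Icc (0 : ℝ) 1, HasDerivAt (fun t : ℝ => (f (a + t * (b - a)) / (b - a)).re)
      (f' (a + t * (b - a))).re t := fun t ht => by
    have hline : HasDerivAt (fun w : ℂ => a + w * (b - a)) (b - a) t := by
      simpa using ((hasDerivAt_id (t : ℂ)).mul_const (b - a)).const_add a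
    have := ((hf _ (hseg t ht)).comp (t : ℂ) hline).div_const (b - a)
    rw [mul_div_cancel_right₀ _ hba] at this
    exact this.real_of_complex
  obtain ⟨t, ht, hslope⟩ := exists_hasDerivAt_eq_slope _ _ zero_lt_one
    (fun t ht => (hderiv t ht).continuousAt.continuousWithinAt)
    (fun t ht => hderiv t (Ioo_subset_Icc_self ht))
  simp only [Complex.ofReal_one, one_mul, add_sub_cancel, Complex.ofReal_zero, zero_mul,
    add_zero, hab, sub_self, zero_div] at hslope
  exact (hf' _ (hseg t (Ioo_subset_Icc_self ht))).ne' hslope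

theorem IsClosed.image_of_norm_le_norm_add {E F : Type*} [NormedAddCommGroup E] [ProperSpace E]
    [NormedAddCommGroup F] {f : E → F} {s : Set E} (hs : IsClosed s) (hf : ContinuousOn f s)
    {c : ℝ} (hc : ∀ z ∈ s, ‖z‖ ≤ ‖f z‖ + c) : IsClosed (f '' s) := by
  refine isClosed_of_closure_subset fun w hw => ?_
  set K := s ∩ Metric.closedBall 0 (‖w‖ + 1 + c)
  have hK : IsCompact K := (isCompact_closedBall _ _).inter_left hs
  have hfK : IsClosed (f '' K) := (hK.image_of_continuousOn (hf.mono inter_subset_left)).isClosed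
  suffices w ∈ closure (f '' K) from image_mono inter_subset_left (hfK.closure_eq ▸ this)
  refine Metric.mem_closure_iff.2 fun ε hε => ?_
  obtain ⟨_, ⟨z, hz, rfl⟩, hdist⟩ := Metric.mem_closure_iff.1 hw (min ε 1) (by positivity)
  have hfz : ‖f z‖ ≤ ‖w‖ + 1 := by
    have := norm_le_norm_add_norm_sub' (f z) w
    rw [← dist_eq_norm, dist_comm] at this
    linarith [min_le_right ε 1]
  refine ⟨f z, ⟨z, ⟨hz, ?_⟩, rfl⟩, hdist.trans_le (min_le_left ε 1)⟩
  rw [mem_closedBall_zero_iff]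
  linarith [hc z hz]

namespace TwoSlit

noncomputable def slitMap (z : ℂ) : ℂ := z + (1 + Complex.exp (2 * z)) / 2

noncomputable def schwarzChristoffel (ζ : ℂ) : ℂ := Complex.log ζ + (1 + ζ ^ 2) / 2

def strip : Set ℂ := {z | |z.im| < π / 2}

def twoSlitPlane : Set ℂ := {w | ¬(w.re ≤ 0 ∧ |w.im| = π / 2)}

theorem differentiable_slitMap : Differentiable ℂ slitMap := by
  unfold slitMap
  fun_prop

theorem slitMap_re (z : ℂ) :
    (slitMap z).re = z.re + (1 + Real.exp (2 * z.re) * Real.cos (2 * z.im)) / 2 := by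
  simp [slitMap, Complex.exp_re]

theorem slitMap_im (z : ℂ) :
    (slitMap z).im = z.im + Real.exp (2 * z.re) * Real.sin (2 * z.im) / 2 := by
  simp [slitMap, Complex.exp_im]

/-- With `r = π - 2y` the hypothesis says `e^{2x} sin r = r`; then `sin r < r` forces `x > 0`,
and `r cos r < sin r` gives `e^{2x} cos r < 1`. -/
theorem re_pos_of_im_eq_pi_div_two {x y : ℝ} (hy₀ : 0 ≤ y) (hy : y < π / 2)
    (h : y + Real.exp (2 * x) * sin (2 * y) / 2 = π / 2) :
    0 < x + (1 + Real.exp (2 * x) * cos (2 * y)) / 2 := by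
  set r := π - 2 * y
  have hr : 0 < r := by linarith
  have h2y : 2 * y = π - r := by ring
  rw [h2y, sin_pi_sub] at h
  rw [h2y, cos_pi_sub]
  have hE : Real.exp (2 * x) * sin r = r := by linarith
  have hsin_pos : 0 < sin r := pos_of_mul_pos_right (hE ▸ hr) (Real.exp_pos _).le
  have hrπ : r < π := lt_of_le_of_ne (by linarith) fun h => by simp [h] at hsin_pos
  have hx : 0 < x := by
    have : 1 < Real.exp (2 * x) := by nlinarith [sin_lt hr]
    linarith [one_lt_exp_iff.1 this]
  have hcos_lt : Real.exp (2 * x) * cos r < 1 := by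
    refine lt_of_mul_lt_mul_right ?_ hsin_pos.le
    calc Real.exp (2 * x) * cos r * sin r = r * cos r := by rw [mul_right_comm, hE]
      _ < 1 * sin r := by rw [one_mul]; exact Real.mul_cos_lt_sin hr hrπ
  linarith

theorem abs_slitMap_im {z : ℂ} (hz : z ∈ strip) :
    |(slitMap z).im| = |z.im| + Real.exp (2 * z.re) * sin (2 * |z.im|) / 2 := by
  have hz : |z.im| < π / 2 := hz
  have hsin : 0 ≤ sin (2 * |z.im|) :=
    sin_nonneg_of_nonneg_of_le_pi (by positivity) (by linarith)
  rw [slitMap_im]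
  rcases le_or_gt 0 z.im with h | h
  · rw [abs_of_nonneg h] at hsin ⊢
    exact abs_of_nonneg (by positivity)
  · rw [abs_of_neg h, mul_neg, sin_neg] at hsin ⊢
    rw [abs_of_nonpos (by nlinarith [Real.exp_pos (2 * z.re)])]
    ring

theorem mapsTo_slitMap : MapsTo slitMap strip twoSlitPlane := by
  rintro z hz ⟨hre, him⟩
  rw [abs_slitMap_im hz] at him
  have hcos : cos (2 * |z.im|) = cos (2 * z.im) := by
    rw [← cos_abs (2 * z.im), abs_mul, abs_two]
  have := re_pos_of_im_eq_pi_div_two (abs_nonneg z.im) hz him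
  rw [hcos] at this
  rw [slitMap_re] at hre
  linarith

theorem slitMap_notMem_twoSlitPlane {z : ℂ} (hz : |z.im| = π / 2) :
    slitMap z ∉ twoSlitPlane := by
  have h2 : 2 * z.im = π ∨ 2 * z.im = -π := by
    rcases abs_eq (by positivity) |>.1 hz with h | h
    · exact .inl (by linarith)
    · exact .inr (by linarith)
  have hsin : sin (2 * z.im) = 0 := by rcases h2 with h | h <;> simp [h]
  have hcos : cos (2 * z.im) = -1 := by rcases h2 with h | h <;> simp [h]
  refine not_not.2 ⟨?_, ?_⟩
  · rw [slitMap_re, hcos]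
    linarith [Real.add_one_le_exp (2 * z.re)]
  · rwa [slitMap_im, hsin, mul_zero, zero_div, add_zero]

theorem injOn_schwarzChristoffel : InjOn schwarzChristoffel {ζ | 0 < ζ.re} := by
  refine Convex.injOn_of_hasDerivAt_re_pos (convex_halfSpace_re_gt 0)
    (f' := fun ζ => ζ⁻¹ + ζ) (fun ζ hζ => ?_) fun ζ hζ => ?_
  · have hlog := Complex.hasDerivAt_log (Complex.mem_slitPlane_iff.2 (.inl hζ))
    exact (hlog.add (((hasDerivAt_pow 2 ζ).const_add 1).div_const 2)).congr_deriv (by ring)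
  · have : 0 < Complex.normSq ζ := Complex.normSq_pos.2 fun h => by simp [h] at hζ
    simp only [Complex.add_re, Complex.inv_re]
    exact add_pos_of_nonneg_of_pos (div_nonneg (le_of_lt hζ) this.le) hζ

theorem mapsTo_exp_strip : MapsTo Complex.exp strip {ζ | 0 < ζ.re} := fun z hz => by
  have hz : |z.im| < π / 2 := hz
  have : 0 < cos z.im := cos_pos_of_mem_Ioo (abs_lt.1 hz)
  simp only [mem_ofPred_eq, Complex.exp_re]
  positivity

theorem log_exp_of_mem_strip {z : ℂ} (hz : z ∈ strip) : Complex.log (Complex.exp z) = z := by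
  have hz : |z.im| < π / 2 := hz
  obtain ⟨h₁, h₂⟩ := abs_lt.1 hz
  exact Complex.log_exp (by linarith [pi_pos]) (by linarith [pi_pos])

theorem schwarzChristoffel_exp {z : ℂ} (hz : z ∈ strip) :
    schwarzChristoffel (Complex.exp z) = slitMap z := by
  rw [schwarzChristoffel, slitMap, log_exp_of_mem_strip hz, ← Complex.exp_nat_mul]
  push_cast
  rfl

theorem injOn_slitMap : InjOn slitMap strip := by
  have hinj : InjOn Complex.exp strip := fun a ha b hb h => by
    rw [← log_exp_of_mem_strip ha, h, log_exp_of_mem_strip hb]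
  exact (EqOn.injOn_iff fun z hz => schwarzChristoffel_exp hz).1
    (injOn_schwarzChristoffel.comp hinj mapsTo_exp_strip)

theorem norm_le_norm_slitMap_add {z : ℂ} (hz : |z.im| ≤ π / 2) : ‖z‖ ≤ ‖slitMap z‖ + 5 := by
  set E := Complex.exp (2 * z)
  have hE : ‖E‖ = Real.exp (2 * z.re) := by simp [E, Complex.norm_exp]
  have hg : slitMap z = z + (1 + E) / 2 := rfl
  have hhalf : ‖(1 + E) / 2‖ = ‖1 + E‖ / 2 := by simp
  have hupper : ‖1 + E‖ ≤ 1 + Real.exp (2 * z.re) := by simpa [hE] using norm_add_le 1 E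
  have hlower : Real.exp (2 * z.re) - 1 ≤ ‖1 + E‖ := by
    simpa [hE, add_comm] using norm_sub_le_norm_add E 1
  have hz_g : ‖z‖ ≤ ‖slitMap z‖ + ‖1 + E‖ / 2 := by
    simpa [hg, hhalf] using norm_sub_le (slitMap z) ((1 + E) / 2)
  have hg_z : ‖1 + E‖ / 2 ≤ ‖slitMap z‖ + ‖z‖ := by
    simpa [hg, hhalf] using norm_sub_le (slitMap z) z
  have hz_re : ‖z‖ ≤ |z.re| + 2 :=
    (Complex.norm_le_abs_re_add_abs_im z).trans (by linarith [pi_lt_four])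
  rcases le_or_gt z.re 0 with hx | hx
  · have : Real.exp (2 * z.re) ≤ 1 := Real.exp_le_one_iff.2 (by linarith)
    linarith
  · -- here `‖slitMap z‖ ≥ (e^{2x} - 1) / 2 - ‖z‖ ≥ x² - 2` with `x = re z`
    have := quadratic_le_exp_of_nonneg (by linarith : 0 ≤ 2 * z.re)
    rw [abs_of_pos hx] at hz_re
    nlinarith

theorem closure_image_slitMap_inter_subset :
    closure (slitMap '' strip) ∩ twoSlitPlane ⊆ slitMap '' strip := by
  rintro w ⟨hw, hwD⟩
  have hS : IsClosed {z : ℂ | |z.im| ≤ π / 2} := isClosed_le (by fun_prop) continuous_const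
  have hclosed : IsClosed (slitMap '' {z | |z.im| ≤ π / 2}) :=
    hS.image_of_norm_le_norm_add differentiable_slitMap.continuous.continuousOn
      fun z hz => norm_le_norm_slitMap_add hz
  have hsub : strip ⊆ {z | |z.im| ≤ π / 2} := fun z (hz : |z.im| < π / 2) => hz.le
  obtain ⟨z, hz, rfl⟩ := hclosed.closure_subset_iff.2 (image_mono hsub) hw
  rcases (show |z.im| ≤ π / 2 from hz).lt_or_eq with h | h
  · exact mem_image_of_mem _ h
  · exact absurd hwD (slitMap_notMem_twoSlitPlane h)

theorem isOpen_strip : IsOpen strip := isOpen_lt (by fun_prop) continuous_const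

theorem convex_strip : Convex ℝ strip := by
  have : strip = Complex.imLm ⁻¹' Ioo (-(π / 2)) (π / 2) := by
    ext z
    simp [strip, abs_lt]
  rw [this]
  exact (convex_Ioo _ _).linear_preimage _

theorem isOpen_image_slitMap : IsOpen (slitMap '' strip) := by
  have h0 : (0 : ℂ) ∈ strip := by simp [strip, pi_pos]
  have h1 : (1 : ℂ) ∈ strip := by simp [strip, pi_pos]
  rcases (differentiable_slitMap.differentiableOn.analyticOnNhd isOpen_strip).is_constant_or_isOpen
    convex_strip.isPreconnected with ⟨w, hw⟩ | h
  · exact absurd (injOn_slitMap h0 h1 ((hw 0 h0).trans (hw 1 h1).symm)) zero_ne_one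
  · exact h strip subset_rfl isOpen_strip

/-- Every point of `twoSlitPlane` is joined to the right half-plane by the ray going right. -/
theorem isPreconnected_twoSlitPlane : IsPreconnected twoSlitPlane := by
  have hH : {z : ℂ | 0 < z.re} ⊆ twoSlitPlane := fun z hz h => (lt_irrefl _ (hz.trans_le h.1))
  refine isPreconnected_of_forall 1 fun w hw => ?_
  set ray := (fun t : ℝ => w + t) '' Ici 0
  refine ⟨ray ∪ {z | 0 < z.re}, union_subset ?_ hH, .inr (by simp), .inl ⟨0, by simp⟩, ?_⟩
  · rintro _ ⟨t, ht, rfl⟩ ⟨hre, him⟩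
    simp only [Complex.add_re, Complex.ofReal_re, Complex.add_im, Complex.ofReal_im,
      add_zero] at hre him
    exact hw ⟨by linarith [mem_Ici.1 ht], him⟩
  · refine (isPreconnected_Ici.image _ (by fun_prop)).union (w + (|w.re| + 1 : ℝ))
      ⟨_, mem_Ici.2 (by positivity), rfl⟩ ?_ (convex_halfSpace_re_gt 0).isPreconnected
    simp only [mem_ofPred_eq, Complex.add_re, Complex.ofReal_re]
    linarith [neg_abs_le w.re]

theorem surjOn_slitMap : SurjOn slitMap strip twoSlitPlane :=
  isPreconnected_twoSlitPlane.subset_of_closure_inter_subset isOpen_image_slitMap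
    ⟨1, by simp [twoSlitPlane], 0, by simp [strip, pi_pos], by norm_num [slitMap]⟩
    closure_image_slitMap_inter_subset

end TwoSlit

theorem stmt8 :
    Differentiable ℂ (fun z : ℂ => z + (1 + Complex.exp (2 * z)) / 2) ∧
    Set.BijOn (fun z : ℂ => z + (1 + Complex.exp (2 * z)) / 2)
      {z : ℂ | |z.im| < π / 2}
      {w : ℂ | ¬(w.re ≤ 0 ∧ |w.im| = π / 2)} :=
  ⟨TwoSlit.differentiable_slitMap, TwoSlit.mapsTo_slitMap, TwoSlit.injOn_slitMap,
    TwoSlit.surjOn_slitMap⟩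
end

section
/- Let (u_n)_{n≥0} be a strictly increasing sequence of nonnegative reals with u₀ = 0 and u_n → +∞, and let δ : (−∞, 0] → [0,∞) be monotonically non-decreasing. If Σ_{n≥0} (u_{n+1} − u_n)² < ∞ and Σ_{n≥0} δ(−u_{n+1})² < ∞, then ∫_{−∞}^0 δ(t) dt < ∞. -/
open Set MeasureTheory Filter

/-!
The intervals `(-u (n+1), -u n]` tile `(-∞, 0]`, and on each of them the non-decreasing `δ` is at
most its value `δ (-u n)` at the right endpoint. Hence `∫_{-∞}^0 δ ≤ ∑ (u (n+1) - u n) δ (-u n)`,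
and this series converges because both factors are square-summable (the second one up to an index
shift by one) and `|a b| ≤ (a ^ 2 + b ^ 2) / 2`.
-/

theorem Antitone.iUnion_Ioc_succ_eq_Iic {β : Type*} [LinearOrder β] {v : ℕ → β}
    (hv : Antitone v) (hv_bot : ¬BddBelow (range v)) :
    ⋃ n, Ioc (v (n + 1)) (v n) = Iic (v 0) := by
  have := iUnion_Ico_map_succ_eq_Ici (α := ℕ) (β := βᵒᵈ) (f := fun n => OrderDual.toDual (v n))
    (fun n => OrderDual.toDual_le_toDual.2 (hv bot_le)) hv_bot
  ext x
  simpa [and_comm] using congrArg (fun s => OrderDual.toDual x ∈ s) this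

theorem summable_mul_of_summable_sq {ι : Type*} {f g : ι → ℝ} (hf : Summable fun i => f i ^ 2)
    (hg : Summable fun i => g i ^ 2) : Summable fun i => f i * g i :=
  .of_norm_bounded ((hf.add hg).div_const 2) fun i => by
    rw [Real.norm_eq_abs, abs_mul]
    nlinarith [two_mul_le_add_sq |f i| |g i|, sq_abs (f i), sq_abs (g i)]

theorem MonotoneOn.integral_norm_Ioc_le {f : ℝ → ℝ} {a b : ℝ} (hf : MonotoneOn f (Icc a b))
    (hab : a ≤ b) (ha : 0 ≤ f a) : ∫ x in Ioc a b, ‖f x‖ ≤ (b - a) * f b := by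
  have hbound : ∀ x ∈ Ioc a b, ‖‖f x‖‖ ≤ f b := fun x hx => by
    have hx' : x ∈ Icc a b := Ioc_subset_Icc_self hx
    rw [norm_norm, Real.norm_of_nonneg (ha.trans (hf (left_mem_Icc.2 hab) hx' hx'.1))]
    exact hf hx' (right_mem_Icc.2 hab) hx'.2
  calc ∫ x in Ioc a b, ‖f x‖
      ≤ ‖∫ x in Ioc a b, ‖f x‖‖ := le_abs_self _
    _ ≤ f b * volume.real (Ioc a b) := norm_setIntegral_le_of_norm_le_const measure_Ioc_lt_top hbound
    _ = (b - a) * f b := by rw [Real.volume_real_Ioc_of_le hab, mul_comm]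

theorem integrableOn_Iic_of_summable_mul_sub {v : ℕ → ℝ} {f : ℝ → ℝ} (hv : Antitone v)
    (hv_bot : Tendsto v atTop atBot) (hf : MonotoneOn f (Iic (v 0)))
    (hf_nonneg : ∀ x ≤ v 0, 0 ≤ f x) (hsum : Summable fun n => (v n - v (n + 1)) * f (v n)) :
    IntegrableOn f (Iic (v 0)) := by
  rw [← hv.iUnion_Ioc_succ_eq_Iic (not_bddBelow_of_tendsto_atBot hv_bot)]
  have hIcc : ∀ n, Icc (v (n + 1)) (v n) ⊆ Iic (v 0) := fun n =>
    Icc_subset_Iic_self.trans (Iic_subset_Iic.2 (hv (Nat.zero_le n)))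
  exact integrableOn_iUnion_of_summable_integral_norm
    (fun n => ((hf.mono (hIcc n)).integrableOn_isCompact isCompact_Icc).mono_set
      Ioc_subset_Icc_self) (hsum.of_nonneg_of_le (fun n => integral_nonneg fun _ => norm_nonneg _)
      fun n => (hf.mono (hIcc n)).integral_norm_Ioc_le (hv n.le_succ)
        (hf_nonneg _ (hv (Nat.zero_le _))))

theorem stmt15_general (u : ℕ → ℝ) (δ : ℝ → ℝ)
    (hu0 : u 0 = 0) (humono : StrictMono u)
    (hutop : Tendsto u atTop atTop)
    (hδ0 : ∀ t ≤ (0:ℝ), 0 ≤ δ t)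
    (hδmono : MonotoneOn δ (Iic 0))
    (hsum1 : Summable (fun n => (u (n+1) - u n) ^ 2))
    (hsum2 : Summable (fun n => (δ (-(u (n+1)))) ^ 2)) :
    IntegrableOn δ (Iic 0) := by
  have hsum2' : Summable fun n => δ (-u n) ^ 2 := (summable_nat_add_iff 1).1 hsum2
  have hsum : Summable fun n => (-u n - -u (n + 1)) * δ (-u n) := by
    simpa only [neg_sub_neg] using summable_mul_of_summable_sq hsum1 hsum2'
  have h := integrableOn_Iic_of_summable_mul_sub (v := fun n => -u n) humono.monotone.neg
    (tendsto_neg_atTop_atBot.comp hutop) (by simpa [hu0] using hδmono)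
    (by simpa [hu0] using hδ0) hsum
  simpa [hu0] using h

theorem stmt15 (u : ℕ → ℝ) (δ : ℝ → ℝ)
    (hu0 : u 0 = 0) (humono : StrictMono u) (hupos : ∀ n, 0 ≤ u n)
    (hutop : Tendsto u atTop atTop)
    (hδ0 : ∀ t ≤ (0:ℝ), 0 ≤ δ t)
    (hδmono : MonotoneOn δ (Iic 0))
    (hsum1 : Summable (fun n => (u (n+1) - u n) ^ 2))
    (hsum2 : Summable (fun n => (δ (-(u (n+1)))) ^ 2)) :
    IntegrableOn δ (Iic 0) :=
  stmt15_general u δ hu0 humono hutop hδ0 hδmono hsum1 hsum2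
end

section
/- Let Ω ⊊ ℂ be a simply connected domain, starlike at infinity (i.e., Ω + t ⊆ Ω for all t ≥ 0), containing a maximal horizontal strip S = {z : a < Im z < b}. Fix y₀ ∈ (a,b) and define δ_Ω(t) as the maximum of a − inf I(t) and sup I(t) − b, where I(t) is the connected component of {y : t + iy ∈ Ω} containing y₀. Then δ_Ω is monotonically non-decreasing on any interval (−∞, t₀] on which it is finite, and δ_Ω(t) → 0 as t → −∞. -/
/-!
Translating to the right maps Ω into itself, so the vertical slices of Ω, and with them the
intervals `I t`, increase with `t`; this gives monotonicity of `δ_Ω`. For the limit, suppose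
that `I t` reaches below `c < a` for arbitrarily negative `t`. Every such `I t` is an interval
containing `(a, b)`, so it contains `(c, b)`, and translating to the right puts the whole strip
`{c < Im z < b}` inside `Ω`, against the maximality of `S`. The upper side is symmetric.
-/

open Set Filter

lemma Set.OrdConnected.Ioo_min_max_subset {s : Set ℝ} (hs : s.OrdConnected) {a b u v : ℝ}
    (hab : a < b) (hIoo : Ioo a b ⊆ s) (hu : u ∈ s) (hv : v ∈ s) :
    Ioo (min u a) (max v b) ⊆ s := by
  rintro y ⟨hy₁, hy₂⟩
  have hm : (a + b) / 2 ∈ s := hIoo ⟨by linarith, by linarith⟩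
  rcases le_or_gt y a with hya | hay
  · have huy : u ≤ y := by
      rcases min_lt_iff.1 hy₁ with h | h
      · exact h.le
      · linarith
    exact hs.out hu hm ⟨huy, by linarith⟩
  rcases lt_or_ge y b with hyb | hby
  · exact hIoo ⟨hay, hyb⟩
  · have hyv : y ≤ v := by
      rcases lt_max_iff.1 hy₂ with h | h
      · exact h.le
      · linarith
    exact hs.out hm hv ⟨by linarith, hyv⟩

/-- `δ_Ω(t)` is `stripExcess a b (I t)`. -/
noncomputable def stripExcess (a b : ℝ) (s : Set ℝ) : ℝ := max (a - sInf s) (sSup s - b)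

lemma stripExcess_mono {a b : ℝ} {s s' : Set ℝ} (hs : s.Nonempty)
    (hbdd : BddBelow s' ∧ BddAbove s') (h : s ⊆ s') :
    stripExcess a b s ≤ stripExcess a b s' :=
  max_le_max (by linarith [csInf_le_csInf hbdd.1 hs h])
    (by linarith [csSup_le_csSup hbdd.2 hs h])

lemma abs_stripExcess_le {a b ε : ℝ} {s : Set ℝ} (hab : a < b) (hIoo : Ioo a b ⊆ s)
    (hs : s ⊆ Icc (a - ε) (b + ε)) : |stripExcess a b s| ≤ ε := by
  have hne : s.Nonempty := (nonempty_Ioo.2 hab).mono hIoo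
  have hinf_le : sInf s ≤ a := by
    simpa [csInf_Ioo hab] using csInf_le_csInf (bddBelow_Icc.mono hs) (nonempty_Ioo.2 hab) hIoo
  have hle_sup : b ≤ sSup s := by
    simpa [csSup_Ioo hab] using csSup_le_csSup (bddAbove_Icc.mono hs) (nonempty_Ioo.2 hab) hIoo
  have hle_inf : a - ε ≤ sInf s := le_csInf hne fun y hy => (hs hy).1
  have hsup_le : sSup s ≤ b + ε := csSup_le hne fun y hy => (hs hy).2
  rw [stripExcess, abs_of_nonneg (le_max_of_le_left (by linarith))]
  exact max_le (by linarith) (by linarith)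

def verticalSlice (Ω : Set ℂ) (t : ℝ) : Set ℝ := {y : ℝ | (t : ℂ) + (y : ℂ) * Complex.I ∈ Ω}

section StarlikeAtInfinity

variable {Ω : Set ℂ} (hstar : ∀ w ∈ Ω, ∀ t : ℝ, 0 ≤ t → w + t ∈ Ω)
include hstar

lemma mem_of_im_mem_verticalSlice {t : ℝ} {z : ℂ} (ht : t ≤ z.re)
    (hz : z.im ∈ verticalSlice Ω t) : z ∈ Ω := by
  have h := hstar _ hz (z.re - t) (by linarith)
  rwa [show (t : ℂ) + z.im * Complex.I + ((z.re - t : ℝ) : ℂ) = z by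
    push_cast; linear_combination Complex.re_add_im z] at h

lemma verticalSlice_mono : Monotone (verticalSlice Ω) := fun t s hts y hy =>
  mem_of_im_mem_verticalSlice hstar (z := s + y * Complex.I) (by simpa using hts) (by simpa using hy)

variable {a b y₀ : ℝ} (hab : a < b) (hy₀ : y₀ ∈ Ioo a b)
  (hS : {z : ℂ | a < z.im ∧ z.im < b} ⊆ Ω)
include hab hy₀ hS

omit hstar hab in
lemma Ioo_subset_connectedComponentIn_verticalSlice (t : ℝ) :
    Ioo a b ⊆ connectedComponentIn (verticalSlice Ω t) y₀ :=
  isPreconnected_Ioo.subset_connectedComponentIn hy₀ fun y hy => hS (by simpa using hy)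

lemma mem_of_mem_connectedComponentIn_verticalSlice {t u v : ℝ} {z : ℂ}
    (hu : u ∈ connectedComponentIn (verticalSlice Ω t) y₀)
    (hv : v ∈ connectedComponentIn (verticalSlice Ω t) y₀)
    (hz : z.im ∈ Ioo (min u a) (max v b)) (ht : t ≤ z.re) : z ∈ Ω :=
  mem_of_im_mem_verticalSlice hstar ht <| connectedComponentIn_subset _ _ <|
    isPreconnected_connectedComponentIn.ordConnected.Ioo_min_max_subset hab
      (Ioo_subset_connectedComponentIn_verticalSlice hy₀ hS t) hu hv hz

lemma eventually_lower_le_connectedComponentIn_verticalSlice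
    (hmax : ∀ a' ≤ a, {z : ℂ | a' < z.im ∧ z.im < b} ⊆ Ω → a' = a) {c : ℝ} (hc : c < a) :
    ∀ᶠ t in atBot, ∀ u ∈ connectedComponentIn (verticalSlice Ω t) y₀, c ≤ u := by
  by_contra h
  simp only [not_eventually, not_forall, not_le, exists_prop] at h
  suffices {z : ℂ | c < z.im ∧ z.im < b} ⊆ Ω by linarith [hmax c hc.le this]
  rintro z ⟨hcz, hzb⟩
  obtain ⟨t, ⟨u, hu, huc⟩, ht⟩ := (h.and_eventually (eventually_le_atBot z.re)).exists
  refine mem_of_mem_connectedComponentIn_verticalSlice hstar hab hy₀ hS hu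
    (Ioo_subset_connectedComponentIn_verticalSlice hy₀ hS t hy₀) ⟨?_, ?_⟩ ht
  · exact (min_le_left u a).trans_lt (huc.trans hcz)
  · exact hzb.trans_le (le_max_right _ _)

lemma eventually_connectedComponentIn_verticalSlice_le_upper
    (hmax : ∀ b' ≥ b, {z : ℂ | a < z.im ∧ z.im < b'} ⊆ Ω → b' = b) {c : ℝ} (hc : b < c) :
    ∀ᶠ t in atBot, ∀ v ∈ connectedComponentIn (verticalSlice Ω t) y₀, v ≤ c := by
  by_contra h
  simp only [not_eventually, not_forall, not_le, exists_prop] at h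
  suffices {z : ℂ | a < z.im ∧ z.im < c} ⊆ Ω by linarith [hmax c hc.le this]
  rintro z ⟨haz, hzc⟩
  obtain ⟨t, ⟨v, hv, hcv⟩, ht⟩ := (h.and_eventually (eventually_le_atBot z.re)).exists
  refine mem_of_mem_connectedComponentIn_verticalSlice hstar hab hy₀ hS
    (Ioo_subset_connectedComponentIn_verticalSlice hy₀ hS t hy₀) hv ⟨?_, ?_⟩ ht
  · exact (min_le_right y₀ a).trans_lt haz
  · exact (hzc.trans hcv).trans_le (le_max_left _ _)

end StarlikeAtInfinity

theorem stmt17_general (Ω : Set ℂ) (a b y₀ : ℝ)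
    (hstar : ∀ w ∈ Ω, ∀ t : ℝ, 0 ≤ t → w + t ∈ Ω)
    (hab : a < b) (hy₀ : y₀ ∈ Ioo a b)
    (hS : {z : ℂ | a < z.im ∧ z.im < b} ⊆ Ω)
    (hmax : ∀ a' b' : ℝ, a' ≤ a → b ≤ b' →
      {z : ℂ | a' < z.im ∧ z.im < b'} ⊆ Ω → a' = a ∧ b' = b) :
    let I : ℝ → Set ℝ := fun t =>
      connectedComponentIn {y : ℝ | (t : ℂ) + (y : ℂ) * Complex.I ∈ Ω} y₀
    let δΩ : ℝ → ℝ := fun t => max (a - sInf (I t)) (sSup (I t) - b)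
    (∀ t₀ : ℝ, (∀ t ≤ t₀, BddBelow (I t) ∧ BddAbove (I t)) →
      MonotoneOn δΩ (Iic t₀)) ∧
    Tendsto δΩ atBot (nhds 0) := by
  intro I δΩ
  have hIoo : ∀ t, Ioo a b ⊆ I t := Ioo_subset_connectedComponentIn_verticalSlice hy₀ hS
  refine ⟨fun t₀ hbdd t _ s hs hts => ?_, ?_⟩
  · exact stripExcess_mono ⟨y₀, hIoo t hy₀⟩ (hbdd s hs)
      (connectedComponentIn_mono _ (verticalSlice_mono hstar hts))
  · refine Metric.tendsto_nhds.2 fun ε hε => ?_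
    filter_upwards
      [eventually_lower_le_connectedComponentIn_verticalSlice hstar hab hy₀ hS
        (fun a' ha' h => (hmax a' b ha' le_rfl h).1) (show a - ε / 2 < a by linarith),
      eventually_connectedComponentIn_verticalSlice_le_upper hstar hab hy₀ hS
        (fun b' hb' h => (hmax a b' le_rfl hb' h).2) (show b < b + ε / 2 by linarith)]
      with t hlow hupp
    rw [Real.dist_eq, sub_zero]
    exact (abs_stripExcess_le hab (hIoo t) fun y hy => ⟨hlow y hy, hupp y hy⟩).trans_lt
      (half_lt_self hε)

theorem stmt17 (Ω : Set ℂ) (a b y₀ : ℝ)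
    (hopen : IsOpen Ω) (hconn : IsConnected Ω) (hne : Ω ≠ Set.univ)
    (hsc : SimplyConnectedSpace Ω)
    (hstar : ∀ w ∈ Ω, ∀ t : ℝ, 0 ≤ t → w + t ∈ Ω)
    (hab : a < b) (hy₀ : y₀ ∈ Ioo a b)
    (hS : {z : ℂ | a < z.im ∧ z.im < b} ⊆ Ω)
    (hmax : ∀ a' b' : ℝ, a' ≤ a → b ≤ b' →
      {z : ℂ | a' < z.im ∧ z.im < b'} ⊆ Ω → a' = a ∧ b' = b) :
    let I : ℝ → Set ℝ := fun t =>
      connectedComponentIn {y : ℝ | (t : ℂ) + (y : ℂ) * Complex.I ∈ Ω} y₀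
    let δΩ : ℝ → ℝ := fun t => max (a - sInf (I t)) (sSup (I t) - b)
    (∀ t₀ : ℝ, (∀ t ≤ t₀, BddBelow (I t) ∧ BddAbove (I t)) →
      MonotoneOn δΩ (Iic t₀)) ∧
    Tendsto δΩ atBot (nhds 0) :=
  stmt17_general Ω a b y₀ hstar hab hy₀ hS hmax
end
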